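/- arXiv:math/0410302 — 4 statements merged into one kernel-verified Lean document; each statement's English description precedes it below -/
import Mathlib

section
/- Let $x \in G_\mathbb{C}$ satisfy $x \in G_\mathbb{R} c_{\beta_1} Q$ and $x \in G_\mathbb{R}\overline{Q}$. Then the set $x K_\mathbb{C} B \cap G_\mathbb{R} c_{\beta_1} B$ is nonempty. (Formula (3.1): $xS_1 \cap S'_8 \ne \emptyset$.) -/
open Matrix

noncomputable section

/-- 4×4 complex matrices. -/
abbrev M4 : Type := Matrix (Fin 4) (Fin 4) ℂ

/-- The standard symplectic form matrix `J = [[0, -I₂],[I₂, 0]]`. -/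
def Jmat : M4 := !![0, 0, -1, 0; 0, 0, 0, -1; 1, 0, 0, 0; 0, 1, 0, 0]

/-- `G_ℂ = Sp(2,ℂ) = {g ∈ GL(4,ℂ) : ᵗg J g = J}`. -/
def GC : Set M4 := {g | IsUnit g ∧ gᵀ * Jmat * g = Jmat}

/-- `K_ℂ = {diag(g, ᵗg⁻¹) : g ∈ GL(2,ℂ)}`. -/
def KC : Set M4 :=
  {m | ∃ g : Matrix (Fin 2) (Fin 2) ℂ, IsUnit g ∧
    m = !![g 0 0, g 0 1, 0, 0;
           g 1 0, g 1 1, 0, 0;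
           0, 0, (gᵀ)⁻¹ 0 0, (gᵀ)⁻¹ 0 1;
           0, 0, (gᵀ)⁻¹ 1 0, (gᵀ)⁻¹ 1 1]}

/-- The Hermitian form of signature (2,2): `(w,z) = w̄₁z₁ + w̄₂z₂ - w̄₃z₃ - w̄₄z₄`. -/
def hermForm (w z : Fin 4 → ℂ) : ℂ :=
  star (w 0) * z 0 + star (w 1) * z 1 - star (w 2) * z 2 - star (w 3) * z 3

/-- `G_ℝ = G_ℂ ∩ U(2,2)`. -/
def GR : Set M4 :=
  {g | g ∈ GC ∧ ∀ w z : Fin 4 → ℂ, hermForm (g.mulVec w) (g.mulVec z) = hermForm w z}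

/-- The standard basis vectors of `ℂ⁴`. -/
def stdVec (i : Fin 4) : Fin 4 → ℂ := Pi.single i 1

/-- `U₊ = ℂe₁ ⊕ ℂe₂`. -/
def Uplus : Submodule ℂ (Fin 4 → ℂ) := Submodule.span ℂ {stdVec 0, stdVec 1}

/-- `U₋ = ℂe₃ ⊕ ℂe₄`. -/
def Uminus : Submodule ℂ (Fin 4 → ℂ) := Submodule.span ℂ {stdVec 2, stdVec 3}

/-- The line `ℂe₁`. -/
def line1 : Submodule ℂ (Fin 4 → ℂ) := Submodule.span ℂ {stdVec 0}

/-- `Q = {g ∈ G_ℂ : g U₊ = U₊}`. -/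
def Qpar : Set M4 := {g | g ∈ GC ∧ Uplus.map g.mulVecLin = Uplus}

/-- `Q̄ = {g ∈ G_ℂ : g U₋ = U₋}`. -/
def Qbar : Set M4 := {g | g ∈ GC ∧ Uminus.map g.mulVecLin = Uminus}

/-- The Borel subgroup `B = {g ∈ G_ℂ : g ℂe₁ = ℂe₁, g U₊ = U₊}`. -/
def Bor : Set M4 :=
  {g | g ∈ GC ∧ line1.map g.mulVecLin = line1 ∧ Uplus.map g.mulVecLin = Uplus}

/-- `t₁(s) = exp s(E₃₁ - E₁₃)`. -/
def t1 (s : ℝ) : M4 :=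
  !![(Real.cos s : ℂ), 0, (-(Real.sin s) : ℂ), 0;
     0, 1, 0, 0;
     ((Real.sin s : ℝ) : ℂ), 0, (Real.cos s : ℂ), 0;
     0, 0, 0, 1]

/-- `t₂(s) = exp s(E₄₂ - E₂₄)`. -/
def t2 (s : ℝ) : M4 :=
  !![1, 0, 0, 0;
     0, (Real.cos s : ℂ), 0, (-(Real.sin s) : ℂ);
     0, 0, 1, 0;
     0, ((Real.sin s : ℝ) : ℂ), 0, (Real.cos s : ℂ)]

def cb1 : M4 := t1 (Real.pi / 4)
def cb2 : M4 := t2 (Real.pi / 4)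
def wb1 : M4 := t1 (Real.pi / 2)
def wb2 : M4 := t2 (Real.pi / 2)

/-- `c_δ = (1/√2) · [[1,0,0,-1],[0,1,-1,0],[0,1,1,0],[1,0,0,1]]`. -/
def cdelta : M4 :=
  ((Real.sqrt 2 : ℂ))⁻¹ • !![1, 0, 0, -1; 0, 1, -1, 0; 0, 1, 1, 0; 1, 0, 0, 1]

/-- The double coset `A g C = {a g c : a ∈ A, c ∈ C}`. -/
def dc (A : Set M4) (g : M4) (C : Set M4) : Set M4 :=
  {m | ∃ a ∈ A, ∃ c ∈ C, m = a * g * c}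

/-
Write `x = g c_{β₁} q` with `g ∈ G_ℝ` and `q ∈ Q`. The Siegel parabolic `Q` is the product
`K_ℂ B`: an element `q ∈ Q` is block upper triangular, and the symplectic relation makes its
diagonal blocks `A` and `ᵗA⁻¹`, so `diag(A, ᵗA⁻¹)⁻¹ q` lies in `Q` and fixes `e₁`. Hence
`q⁻¹ ∈ K_ℂ B`, and `x q⁻¹ = g c_{β₁}` lies in `G_ℝ c_{β₁} B`.
-/

section

variable {n K : Type*} [Fintype n] [DecidableEq n] [Field K] {U : Submodule K (n → K)}

lemma map_mulVecLin_eq_of_mul_eq_one {g h : Matrix n n K} (hgh : g * h = 1)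
    (hg : U.map g.mulVecLin ≤ U) (hh : U.map h.mulVecLin ≤ U) : U.map g.mulVecLin = U := by
  refine le_antisymm hg ?_
  calc U = (U.map h.mulVecLin).map g.mulVecLin := by
        rw [← Submodule.map_comp, ← mulVecLin_mul, hgh, mulVecLin_one, Submodule.map_id]
    _ ≤ U.map g.mulVecLin := Submodule.map_mono hh

lemma map_mulVecLin_nonsing_inv {g : Matrix n n K} (hg : IsUnit g) (h : U.map g.mulVecLin = U) :
    U.map g⁻¹.mulVecLin = U := by
  conv_lhs => rw [← h]
  rw [← Submodule.map_comp, ← mulVecLin_mul,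
    nonsing_inv_mul _ ((isUnit_iff_isUnit_det g).mp hg), mulVecLin_one, Submodule.map_id]

end

lemma mul_mem_GC {a b : M4} (ha : a ∈ GC) (hb : b ∈ GC) : a * b ∈ GC := by
  refine ⟨ha.1.mul hb.1, ?_⟩
  calc (a * b)ᵀ * Jmat * (a * b) = bᵀ * (aᵀ * Jmat * a) * b := by
        simp only [transpose_mul, Matrix.mul_assoc]
    _ = Jmat := by rw [ha.2, hb.2]

lemma nonsing_inv_mem_GC {a : M4} (ha : a ∈ GC) : a⁻¹ ∈ GC := by
  have hdet : IsUnit a.det := (isUnit_iff_isUnit_det a).mp ha.1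
  refine ⟨isUnit_nonsing_inv_iff.mpr ha.1, ?_⟩
  calc a⁻¹ᵀ * Jmat * a⁻¹ = a⁻¹ᵀ * (aᵀ * Jmat * a) * a⁻¹ := by rw [ha.2]
    _ = (a * a⁻¹)ᵀ * Jmat * (a * a⁻¹) := by simp only [transpose_mul, Matrix.mul_assoc]
    _ = Jmat := by rw [mul_nonsing_inv _ hdet, transpose_one, Matrix.one_mul, Matrix.mul_one]

lemma mul_mem_Qpar {a b : M4} (ha : a ∈ Qpar) (hb : b ∈ Qpar) : a * b ∈ Qpar :=
  ⟨mul_mem_GC ha.1 hb.1, by rw [mulVecLin_mul, Submodule.map_comp, hb.2, ha.2]⟩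

lemma nonsing_inv_mem_Qpar {a : M4} (ha : a ∈ Qpar) : a⁻¹ ∈ Qpar :=
  ⟨nonsing_inv_mem_GC ha.1, map_mulVecLin_nonsing_inv ha.1.1 ha.2⟩

lemma one_mem_Bor : (1 : M4) ∈ Bor :=
  ⟨⟨isUnit_one, by simp⟩, by simp, by simp⟩

lemma mem_Uplus_iff (v : Fin 4 → ℂ) : v ∈ Uplus ↔ v 2 = 0 ∧ v 3 = 0 := by
  rw [Uplus, Submodule.mem_span_pair]
  constructor
  · rintro ⟨a, b, rfl⟩
    simp [stdVec]
  · rintro ⟨h2, h3⟩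
    refine ⟨v 0, v 1, funext fun i => ?_⟩
    fin_cases i <;> simp [stdVec, h2, h3]

lemma map_Uplus_le_iff (g : M4) :
    Uplus.map g.mulVecLin ≤ Uplus ↔ g 2 0 = 0 ∧ g 3 0 = 0 ∧ g 2 1 = 0 ∧ g 3 1 = 0 := by
  rw [Uplus, Submodule.map_span, Set.image_pair, Submodule.span_le, Set.insert_subset_iff,
    Set.singleton_subset_iff, ← Uplus]
  simp [mem_Uplus_iff, stdVec, mulVec_single, and_assoc]

def levi (A : Matrix (Fin 2) (Fin 2) ℂ) : M4 :=
  !![A 0 0, A 0 1, 0, 0;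
     A 1 0, A 1 1, 0, 0;
     0, 0, (Aᵀ)⁻¹ 0 0, (Aᵀ)⁻¹ 0 1;
     0, 0, (Aᵀ)⁻¹ 1 0, (Aᵀ)⁻¹ 1 1]

lemma levi_mem_KC {A : Matrix (Fin 2) (Fin 2) ℂ} (hA : IsUnit A) : levi A ∈ KC := ⟨A, hA, rfl⟩

lemma levi_mul (A B : Matrix (Fin 2) (Fin 2) ℂ) : levi A * levi B = levi (A * B) := by
  unfold levi
  rw [transpose_mul, Matrix.mul_inv_rev]
  ext i j
  fin_cases i <;> fin_cases j <;> simp [Matrix.mul_apply, Fin.sum_univ_four, Fin.sum_univ_two]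

lemma levi_one : levi 1 = 1 := by
  ext i j
  fin_cases i <;> fin_cases j <;> simp [levi]

lemma levi_mul_levi_inv {A : Matrix (Fin 2) (Fin 2) ℂ} (hA : IsUnit A) : levi A * levi A⁻¹ = 1 := by
  rw [levi_mul, Matrix.mul_nonsing_inv _ ((isUnit_iff_isUnit_det A).mp hA), levi_one]

lemma levi_mem_GC {A : Matrix (Fin 2) (Fin 2) ℂ} (hA : IsUnit A) : levi A ∈ GC := by
  refine ⟨.of_mul_eq_one _ (levi_mul_levi_inv hA), ?_⟩
  have hAd : IsUnit Aᵀ.det := by rwa [det_transpose, ← isUnit_iff_isUnit_det]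
  have h := Matrix.mul_nonsing_inv _ hAd
  have h00 := congrFun (congrFun h 0) 0
  have h01 := congrFun (congrFun h 0) 1
  have h10 := congrFun (congrFun h 1) 0
  have h11 := congrFun (congrFun h 1) 1
  simp only [Matrix.mul_apply, transpose_apply, Fin.sum_univ_two, one_apply_eq, ne_eq,
    zero_ne_one, one_ne_zero, not_false_eq_true, one_apply_ne] at h00 h01 h10 h11
  ext i j
  fin_cases i <;> fin_cases j <;> simp [levi, Jmat, Matrix.mul_apply, Fin.sum_univ_four] <;> grind

lemma levi_mem_Qpar {A : Matrix (Fin 2) (Fin 2) ℂ} (hA : IsUnit A) : levi A ∈ Qpar := by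
  refine ⟨levi_mem_GC hA, map_mulVecLin_eq_of_mul_eq_one (levi_mul_levi_inv hA) ?_ ?_⟩ <;>
    simp [map_Uplus_le_iff, levi]

lemma isUnit_upperLeft_of_mem_GC {p : M4} (hp : p ∈ GC)
    (h20 : p 2 0 = 0) (h30 : p 3 0 = 0) (h21 : p 2 1 = 0) (h31 : p 3 1 = 0) :
    IsUnit !![p 0 0, p 0 1; p 1 0, p 1 1] := by
  -- with the lower-left block of `p` zero, the upper-right block of `ᵗp J p = J` reads `ᵗA D = 1`
  refine .of_mul_eq_one_right !![p 2 2, p 3 2; p 2 3, p 3 3] ?_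
  have hJ := fun i j => congrFun (congrFun hp.2 i) j
  have h02 := hJ 0 2
  have h03 := hJ 0 3
  have h12 := hJ 1 2
  have h13 := hJ 1 3
  simp only [Jmat, Matrix.mul_apply, transpose_apply, of_apply, cons_val', cons_val_fin_one,
    Fin.sum_univ_four, cons_val_zero, cons_val_one, cons_val, h20, h30, h21, h31, zero_mul,
    mul_zero, add_zero, zero_add, mul_neg, neg_mul, mul_one] at h02 h03 h12 h13
  ext i j
  fin_cases i <;> fin_cases j <;> simp [Matrix.mul_apply] <;> grind

lemma Qpar_subset_dc_KC_Bor : Qpar ⊆ dc KC 1 Bor := by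
  intro p hp
  obtain ⟨h20, h30, h21, h31⟩ := (map_Uplus_le_iff p).mp hp.2.le
  set A : Matrix (Fin 2) (Fin 2) ℂ := !![p 0 0, p 0 1; p 1 0, p 1 1]
  have hA : IsUnit A := isUnit_upperLeft_of_mem_GC hp.1 h20 h30 h21 h31
  have hAinv : IsUnit A⁻¹ := isUnit_nonsing_inv_iff.mpr hA
  have hfix : (levi A⁻¹ * p).mulVec (stdVec 0) = stdVec 0 := by
    have hAA := nonsing_inv_mul A ((isUnit_iff_isUnit_det A).mp hA)
    have h0 : A⁻¹ 0 0 * p 0 0 + A⁻¹ 0 1 * p 1 0 = 1 := by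
      simpa [Matrix.mul_apply, A] using congrFun (congrFun hAA 0) 0
    have h1 : A⁻¹ 1 0 * p 0 0 + A⁻¹ 1 1 * p 1 0 = 0 := by
      simpa [Matrix.mul_apply, A] using congrFun (congrFun hAA 1) 0
    ext i
    fin_cases i <;>
      simp [levi, stdVec, mulVec, dotProduct, Matrix.mul_apply, Fin.sum_univ_four, h20, h30, h0, h1]
  refine ⟨levi A, levi_mem_KC hA, levi A⁻¹ * p, ⟨mul_mem_GC (levi_mem_GC hAinv) hp.1, ?_,
    (mul_mem_Qpar (levi_mem_Qpar hAinv) hp).2⟩, ?_⟩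
  · rw [line1, Submodule.map_span, Set.image_singleton, mulVecLin_apply, hfix]
  · rw [Matrix.mul_one, ← Matrix.mul_assoc, levi_mul_levi_inv hA, Matrix.one_mul]

theorem stmt_2_general (x : M4) (hx1 : x ∈ dc GR cb1 Qpar) :
    ((fun m => x * m) '' dc KC 1 Bor ∩ dc GR cb1 Bor).Nonempty := by
  obtain ⟨g, hg, q, hq, rfl⟩ := hx1
  have hq' : q * q⁻¹ = 1 := mul_nonsing_inv q ((isUnit_iff_isUnit_det q).mp hq.1.1)
  refine ⟨g * cb1, ⟨q⁻¹, Qpar_subset_dc_KC_Bor (nonsing_inv_mem_Qpar hq), ?_⟩,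
    g, hg, 1, one_mem_Bor, (Matrix.mul_one _).symm⟩
  simp only [Matrix.mul_assoc, hq', Matrix.mul_one]

/-- Formula (3.1): if `x ∈ G_ℝ c_{β₁} Q` and `x ∈ G_ℝ Q̄`, then
`x K_ℂ B ∩ G_ℝ c_{β₁} B ≠ ∅` (i.e. `xS₁ ∩ S'₈ ≠ ∅`). -/
theorem stmt_2 (x : M4) (hx1 : x ∈ dc GR cb1 Qpar) (hx2 : x ∈ dc GR 1 Qbar) :
    ((fun m => x * m) '' dc KC 1 Bor ∩ dc GR cb1 Bor).Nonempty :=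
  stmt_2_general x hx1
end
end

section
/- The double coset $K_\mathbb{C} w_{\beta_2} B$ is contained in the closure (in $G_\mathbb{C}$) of the double coset $K_\mathbb{C} c_\delta w_{\beta_2} B$. (Remark 3.3, first inclusion: $S_3 \subset S_7^{cl}$.) -/
open Matrix

noncomputable section

/-
For `u ≠ 0` the element `w_{β₂} n(u)`, with `n(u)` the unipotent element `1 + u (E₂₁ - E₃₄)`,
factors as `k(u) (c_δ w_{β₂}) b(u)` with `k(u) ∈ K_ℂ` and `b(u) ∈ B`. Letting `u → 0` puts
`w_{β₂}` in the closure of `K_ℂ c_δ w_{β₂} B`; this closure is stable under left multiplication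
by `K_ℂ` and right multiplication by `B`, since both act by homeomorphisms preserving the double
coset, so it contains all of `K_ℂ w_{β₂} B`.
-/

open Filter Topology

lemma Submodule.map_eq_self_of_injective_of_map_le {K V : Type*} [Field K] [AddCommGroup V]
    [Module K V] [FiniteDimensional K V] {f : V →ₗ[K] V} (hf : Function.Injective f)
    {W : Submodule K V} (h : W.map f ≤ W) : W.map f = W :=
  Submodule.eq_of_le_of_finrank_eq h (W.equivMapOfInjective f hf).finrank_eq.symm

lemma dc_subset_closure_of_mem_closure {A C : Set M4} {g h : M4}
    (hA : ∀ a ∈ A, ∀ a' ∈ A, a * a' ∈ A) (hC : ∀ c ∈ C, ∀ c' ∈ C, c * c' ∈ C)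
    (hg : g ∈ closure (dc A h C)) :
    dc A g C ⊆ closure (dc A h C) := by
  rintro _ ⟨a, ha, c, hc, rfl⟩
  refine map_mem_closure (f := fun x => a * x * c) (by fun_prop) hg ?_
  rintro _ ⟨a', ha', c', hc', rfl⟩
  exact ⟨a * a', hA a ha a' ha', c' * c, hC c' hc' c hc, by noncomm_ring⟩

lemma ofReal_sqrt_two_inv_mul_self :
    ((Real.sqrt 2 : ℂ))⁻¹ * ((Real.sqrt 2 : ℂ))⁻¹ = 2⁻¹ := by
  rw [← mul_inv, ← Complex.ofReal_mul, Real.mul_self_sqrt zero_le_two, Complex.ofReal_ofNat]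

lemma Jmat_mul_Jmat : Jmat * Jmat = -1 := by
  ext i j
  fin_cases i <;> fin_cases j <;> simp [Jmat, Matrix.mul_apply, Fin.sum_univ_four]

lemma isUnit_of_transpose_mul_Jmat_mul {g : M4} (h : gᵀ * Jmat * g = Jmat) : IsUnit g := by
  have hJ : IsUnit Jmat.det :=
    Matrix.isUnit_det_of_right_inverse (B := -Jmat) (by rw [mul_neg, Jmat_mul_Jmat, neg_neg])
  have hdet : g.det * g.det * Jmat.det = 1 * Jmat.det := by
    have := congrArg Matrix.det h
    rw [Matrix.det_mul, Matrix.det_mul, Matrix.det_transpose] at this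
    linear_combination this
  exact (Matrix.isUnit_iff_isUnit_det g).mpr (.of_mul_eq_one _ (hJ.mul_left_injective hdet))

lemma mul_mem_GC_s5 {x y : M4} (hx : x ∈ GC) (hy : y ∈ GC) : x * y ∈ GC := by
  refine ⟨hx.1.mul hy.1, ?_⟩
  calc (x * y)ᵀ * Jmat * (x * y) = yᵀ * (xᵀ * Jmat * x) * y := by
        rw [Matrix.transpose_mul]; noncomm_ring
    _ = Jmat := by rw [hx.2, hy.2]

lemma mul_mem_Bor {x y : M4} (hx : x ∈ Bor) (hy : y ∈ Bor) : x * y ∈ Bor := by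
  refine ⟨mul_mem_GC_s5 hx.1 hy.1, ?_, ?_⟩ <;> rw [Matrix.mulVecLin_mul, Submodule.map_comp]
  · rw [hy.2.1, hx.2.1]
  · rw [hy.2.2, hx.2.2]

lemma mul_mem_KC {x y : M4} (hx : x ∈ KC) (hy : y ∈ KC) : x * y ∈ KC := by
  obtain ⟨g, hg, rfl⟩ := hx
  obtain ⟨g', hg', rfl⟩ := hy
  refine ⟨g * g', hg.mul hg', ?_⟩
  rw [Matrix.transpose_mul, Matrix.mul_inv_rev]
  ext i j
  fin_cases i <;> fin_cases j <;> simp [Matrix.mul_apply, Fin.sum_univ_four, Fin.sum_univ_two]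

lemma mem_Bor_of_GC_of_eq_zero {g : M4} (hg : g ∈ GC) (h10 : g 1 0 = 0) (h20 : g 2 0 = 0)
    (h30 : g 3 0 = 0) (h21 : g 2 1 = 0) (h31 : g 3 1 = 0) : g ∈ Bor := by
  have hinj : Function.Injective g.mulVecLin := Matrix.mulVec_injective_iff_isUnit.mpr hg.1
  have hcol0 : g.mulVecLin (stdVec 0) = g 0 0 • stdVec 0 := by
    ext i; fin_cases i <;> simp [stdVec, h10, h20, h30]
  have hcol1 : g.mulVecLin (stdVec 1) = g 0 1 • stdVec 0 + g 1 1 • stdVec 1 := by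
    ext i; fin_cases i <;> simp [stdVec, h21, h31]
  refine ⟨hg, Submodule.map_eq_self_of_injective_of_map_le hinj ?_,
    Submodule.map_eq_self_of_injective_of_map_le hinj ?_⟩
  · rw [line1, Submodule.map_span_le]
    rintro _ rfl
    rw [hcol0]
    exact Submodule.smul_mem _ _ (Submodule.mem_span_singleton_self _)
  · rw [Uplus, Submodule.map_span_le]
    have h0 : stdVec 0 ∈ Uplus := Submodule.subset_span (by simp)
    have h1 : stdVec 1 ∈ Uplus := Submodule.subset_span (by simp)
    rintro _ (rfl | rfl)
    · rw [hcol0]; exact Uplus.smul_mem _ h0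
    · rw [hcol1]; exact Uplus.add_mem (Uplus.smul_mem _ h0) (Uplus.smul_mem _ h1)

def kmat (u : ℂ) : M4 := !![u⁻¹, 0, 0, 0; 0, 1, 0, 0; 0, 0, u, 0; 0, 0, 0, 1]

def bmat (u : ℂ) : M4 :=
  ((Real.sqrt 2 : ℂ))⁻¹ • !![2 * u, 1, 0, 0; 0, 1, 0, 0; 0, 0, u⁻¹, 0; 0, 0, -u⁻¹, 2]

def nmat (u : ℂ) : M4 := !![1, 0, 0, 0; u, 1, 0, 0; 0, 0, 1, -u; 0, 0, 0, 1]

lemma wb2_eq : wb2 = !![1, 0, 0, 0; 0, 0, 0, -1; 0, 0, 1, 0; 0, 1, 0, 0] := by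
  rw [wb2, t2, Real.cos_pi_div_two, Real.sin_pi_div_two]
  norm_num

lemma kmat_mem_KC {u : ℂ} (hu : u ≠ 0) : kmat u ∈ KC := by
  refine ⟨!![u⁻¹, 0; 0, 1], by simpa [Matrix.isUnit_iff_isUnit_det] using hu, ?_⟩
  have hinv : (!![u⁻¹, 0; 0, 1]ᵀ)⁻¹ = !![u, 0; 0, 1] := by
    refine Matrix.inv_eq_right_inv ?_
    ext i j
    fin_cases i <;> fin_cases j <;> simp [Matrix.mul_apply, hu]
  rw [hinv]
  ext i j
  fin_cases i <;> fin_cases j <;> simp [kmat]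

lemma bmat_mem_Bor {u : ℂ} (hu : u ≠ 0) : bmat u ∈ Bor := by
  have hsymp : (bmat u)ᵀ * Jmat * bmat u = Jmat := by
    rw [bmat, Matrix.transpose_smul, Matrix.smul_mul, Matrix.smul_mul, Matrix.mul_smul, smul_smul,
      ofReal_sqrt_two_inv_mul_self, inv_smul_eq_iff₀ two_ne_zero]
    ext i j
    fin_cases i <;> fin_cases j <;> simp [Jmat, Matrix.mul_apply, Fin.sum_univ_four] <;>
      field_simp
  exact mem_Bor_of_GC_of_eq_zero ⟨isUnit_of_transpose_mul_Jmat_mul hsymp, hsymp⟩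
    (by simp [bmat]) (by simp [bmat]) (by simp [bmat]) (by simp [bmat]) (by simp [bmat])

lemma kmat_mul_cdelta_mul_wb2_mul_bmat {u : ℂ} (hu : u ≠ 0) :
    kmat u * (cdelta * wb2) * bmat u = wb2 * nmat u := by
  simp only [cdelta, bmat, Matrix.smul_mul, Matrix.mul_smul, smul_smul]
  rw [ofReal_sqrt_two_inv_mul_self, inv_smul_eq_iff₀ two_ne_zero, wb2_eq]
  ext i j
  fin_cases i <;> fin_cases j <;> simp [kmat, nmat, Matrix.mul_apply, Fin.sum_univ_four] <;>
    field_simp <;> ring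

lemma continuous_nmat : Continuous nmat :=
  continuous_matrix fun i j => by fin_cases i <;> fin_cases j <;> simp [nmat] <;> fun_prop

lemma nmat_zero : nmat 0 = 1 := by
  ext i j
  fin_cases i <;> fin_cases j <;> simp [nmat]

lemma wb2_mem_closure_dc : wb2 ∈ closure (dc KC (cdelta * wb2) Bor) := by
  have hlim : Tendsto (fun u => wb2 * nmat u) (𝓝[≠] 0) (𝓝 wb2) := by
    have h := (continuous_nmat.tendsto 0).const_mul wb2
    rw [nmat_zero, mul_one] at h
    exact h.mono_left nhdsWithin_le_nhds
  refine mem_closure_of_tendsto hlim (eventually_nhdsWithin_of_forall fun u hu => ?_)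
  exact ⟨kmat u, kmat_mem_KC hu, bmat u, bmat_mem_Bor hu,
    (kmat_mul_cdelta_mul_wb2_mul_bmat hu).symm⟩

/-- Remark 3.3, first inclusion: `K_ℂ w_{β₂} B ⊆ cl(K_ℂ c_δ w_{β₂} B)`,
i.e. `S₃ ⊆ S₇^cl`. -/
theorem stmt_5 : dc KC wb2 Bor ⊆ closure (dc KC (cdelta * wb2) Bor) :=
  dc_subset_closure_of_mem_closure (fun _ ha _ ha' => mul_mem_KC ha ha')
    (fun _ hc _ hc' => mul_mem_Bor hc hc') wb2_mem_closure_dc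
end
end

section
/- The double coset $G_\mathbb{R} c_{\beta_1} c_{\beta_2} B$ is contained in the closure (in $G_\mathbb{C}$) of the double coset $G_\mathbb{R} c_\delta B$. (The inclusion $S'_{\rm op} \subset {S'_{10}}^{cl}$ used to deduce (3.5) from (3.3).) -/
/-!
The curve `τ ↦ c_{β₁} c_{β₂} u(τ)`, with `u(τ) = 1 + iτ (E₂₁ - E₃₄)` unipotent in `K_ℂ`, tends
to `c_{β₁} c_{β₂}` as `τ → 0`, and lies in `G_ℝ c_δ B` for `τ ≠ 0`. Indeed, `P ∈ G_ℂ` lies in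
`G_ℝ g B` as soon as the Hermitian Gram matrices `Pᴴ H P` and `(g b)ᴴ H (g b)` agree for some
`b ∈ B`, since then `P (g b)⁻¹ ∈ G_ℝ`; for `P = c_{β₁} c_{β₂} u(τ)` and `g = c_δ` the element
`b(τ) = diag(A, ᵗA⁻¹)` with `A = [[2iτ, 1], [0, 1]]` does it. As `G_ℝ c_δ B` is stable under
`G_ℝ` on the left and `B` on the right, so is its closure, which therefore contains
`G_ℝ c_{β₁} c_{β₂} B`.
-/

open Matrix

noncomputable section

namespace Matrix

variable {n R : Type*} [Fintype n] [CommRing R]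

theorem transpose_mul_mul_eq_mul {F A B : Matrix n n R} (hA : Aᵀ * F * A = F)
    (hB : Bᵀ * F * B = F) : (A * B)ᵀ * F * (A * B) = F :=
  calc (A * B)ᵀ * F * (A * B) = Bᵀ * (Aᵀ * F * A) * B := by
        simp only [transpose_mul, Matrix.mul_assoc]
    _ = F := by rw [hA, hB]

variable [DecidableEq n]

theorem isUnit_of_transpose_mul_mul_eq {F A : Matrix n n R} (hF : IsUnit F)
    (h : Aᵀ * F * A = F) : IsUnit A := by
  rw [isUnit_iff_isUnit_det] at hF ⊢
  have hdet : A.det * A.det * F.det = 1 * F.det := by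
    rw [one_mul]
    simpa only [det_mul, det_transpose, mul_comm, mul_left_comm] using congrArg det h
  exact IsUnit.of_mul_eq_one _ (hF.mul_left_injective hdet)

theorem transpose_mul_mul_eq_nonsing_inv {F A : Matrix n n R} (hA : IsUnit A)
    (h : Aᵀ * F * A = F) : A⁻¹ᵀ * F * A⁻¹ = F := by
  have hdet := (isUnit_iff_isUnit_det A).mp hA
  calc A⁻¹ᵀ * F * A⁻¹ = Aᵀ⁻¹ * (Aᵀ * F * A) * A⁻¹ := by rw [h, transpose_nonsing_inv]
    _ = F := by
        rw [← Matrix.mul_assoc, ← Matrix.mul_assoc, nonsing_inv_mul _ (by rwa [det_transpose]),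
          Matrix.one_mul, Matrix.mul_assoc, mul_nonsing_inv _ hdet, Matrix.mul_one]

theorem conjTranspose_mul_mul_eq_mul_nonsing_inv [StarRing R] {F P Q : Matrix n n R}
    (hQ : IsUnit Q) (h : Pᴴ * F * P = Qᴴ * F * Q) : (P * Q⁻¹)ᴴ * F * (P * Q⁻¹) = F := by
  have hdet := (isUnit_iff_isUnit_det Q).mp hQ
  have hdetH : IsUnit Qᴴ.det := by rw [det_conjTranspose]; exact hdet.star
  calc (P * Q⁻¹)ᴴ * F * (P * Q⁻¹) = Qᴴ⁻¹ * (Pᴴ * F * P) * Q⁻¹ := by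
        rw [conjTranspose_mul, conjTranspose_nonsing_inv]; simp only [Matrix.mul_assoc]
    _ = F := by
        rw [h, ← Matrix.mul_assoc, ← Matrix.mul_assoc, nonsing_inv_mul _ hdetH, Matrix.one_mul,
          Matrix.mul_assoc, mul_nonsing_inv _ hdet, Matrix.mul_one]

end Matrix

theorem Submodule.map_eq_of_map_le_of_injective {K V : Type*} [Field K] [AddCommGroup V]
    [Module K V] [FiniteDimensional K V] {f : V →ₗ[K] V} (hf : Function.Injective f)
    {p : Submodule K V} (h : p.map f ≤ p) : p.map f = p :=
  Submodule.eq_of_le_of_finrank_eq h (Submodule.equivMapOfInjective f hf p).finrank_eq.symm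

theorem dc_subset_closure_dc {A C : Set M4} {g g' : M4}
    (hA : ∀ a ∈ A, ∀ a' ∈ A, a * a' ∈ A) (hC : ∀ c ∈ C, ∀ c' ∈ C, c * c' ∈ C)
    (hg : g ∈ closure (dc A g' C)) : dc A g C ⊆ closure (dc A g' C) := by
  rintro _ ⟨a, ha, c, hc, rfl⟩
  refine map_mem_closure (f := fun X => a * X * c) (by fun_prop) hg ?_
  rintro _ ⟨a', ha', c', hc', rfl⟩
  exact ⟨a * a', hA a ha a' ha', c' * c, hC c' hc' c hc, by simp only [Matrix.mul_assoc]⟩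

open Complex Filter Topology

def hermMat : M4 := diagonal ![1, 1, -1, -1]

theorem hermForm_eq_dotProduct (w z : Fin 4 → ℂ) : hermForm w z = star w ⬝ᵥ hermMat *ᵥ z := by
  simp [hermForm, hermMat, dotProduct, Fin.sum_univ_four, mulVec_diagonal]
  ring

theorem hermForm_mulVec {g : M4} (hg : gᴴ * hermMat * g = hermMat) (w z : Fin 4 → ℂ) :
    hermForm (g *ᵥ w) (g *ᵥ z) = hermForm w z := by
  rw [hermForm_eq_dotProduct, hermForm_eq_dotProduct, star_mulVec, mulVec_mulVec,
    dotProduct_mulVec, vecMul_vecMul, ← dotProduct_mulVec, ← Matrix.mul_assoc, hg]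

theorem isUnit_Jmat : IsUnit Jmat := by
  refine IsUnit.of_mul_eq_one (-Jmat) ?_
  ext i j; fin_cases i <;> fin_cases j <;> simp [Jmat, mul_apply, Fin.sum_univ_four]

theorem mem_GC_of_transpose_mul_mul {g : M4} (h : gᵀ * Jmat * g = Jmat) : g ∈ GC :=
  ⟨isUnit_of_transpose_mul_mul_eq isUnit_Jmat h, h⟩

theorem GC_mul {g h : M4} (hg : g ∈ GC) (hh : h ∈ GC) : g * h ∈ GC :=
  ⟨hg.1.mul hh.1, transpose_mul_mul_eq_mul hg.2 hh.2⟩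

theorem GC_nonsing_inv {g : M4} (hg : g ∈ GC) : g⁻¹ ∈ GC :=
  mem_GC_of_transpose_mul_mul (transpose_mul_mul_eq_nonsing_inv hg.1 hg.2)

theorem GR_mul {g h : M4} (hg : g ∈ GR) (hh : h ∈ GR) : g * h ∈ GR :=
  ⟨GC_mul hg.1 hh.1, fun w z => by rw [← mulVec_mulVec, ← mulVec_mulVec, hg.2, hh.2]⟩

theorem Bor_mul {g h : M4} (hg : g ∈ Bor) (hh : h ∈ Bor) : g * h ∈ Bor := by
  refine ⟨GC_mul hg.1 hh.1, ?_, ?_⟩ <;> rw [mulVecLin_mul, Submodule.map_comp]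
  · rw [hh.2.1, hg.2.1]
  · rw [hh.2.2, hg.2.2]

theorem mem_Bor_of_mulVec_mem {g : M4} (hg : g ∈ GC) (h₀ : g *ᵥ stdVec 0 ∈ line1)
    (h₁ : g *ᵥ stdVec 1 ∈ Uplus) : g ∈ Bor := by
  have hinj : Function.Injective g.mulVecLin := mulVec_injective_iff_isUnit.mpr hg.1
  have hline : line1 ≤ Uplus := Submodule.span_mono (by simp)
  refine ⟨hg, Submodule.map_eq_of_map_le_of_injective hinj ?_,
    Submodule.map_eq_of_map_le_of_injective hinj ?_⟩
  · rw [line1, Submodule.map_span, Set.image_singleton, Submodule.span_singleton_le_iff_mem]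
    exact h₀
  · rw [Uplus, Submodule.map_span, Submodule.span_le, Set.image_insert_eq, Set.image_singleton,
      Set.insert_subset_iff, Set.singleton_subset_iff]
    exact ⟨hline h₀, h₁⟩

theorem mem_dc_of_conjTranspose_mul_mul_eq {P g b : M4} (hP : P ∈ GC) (hg : g ∈ GC)
    (hb : b ∈ Bor) (h : Pᴴ * hermMat * P = (g * b)ᴴ * hermMat * (g * b)) :
    P ∈ dc GR g Bor := by
  have hgb := GC_mul hg hb.1
  refine ⟨P * (g * b)⁻¹, ⟨GC_mul hP (GC_nonsing_inv hgb),
    hermForm_mulVec (conjTranspose_mul_mul_eq_mul_nonsing_inv hgb.1 h)⟩, b, hb, ?_⟩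
  rw [Matrix.mul_assoc, Matrix.mul_assoc,
    nonsing_inv_mul _ ((isUnit_iff_isUnit_det _).mp hgb.1), Matrix.mul_one]

theorem t1_mem_GC (s : ℝ) : t1 s ∈ GC := by
  have h := sin_sq_add_cos_sq (s : ℂ)
  refine mem_GC_of_transpose_mul_mul ?_
  ext i j; fin_cases i <;> fin_cases j <;> simp [t1, Jmat, mul_apply, Fin.sum_univ_four] <;>
    first | linear_combination | linear_combination h | linear_combination -h

theorem t2_mem_GC (s : ℝ) : t2 s ∈ GC := by
  have h := sin_sq_add_cos_sq (s : ℂ)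
  refine mem_GC_of_transpose_mul_mul ?_
  ext i j; fin_cases i <;> fin_cases j <;> simp [t2, Jmat, mul_apply, Fin.sum_univ_four] <;>
    first | linear_combination | linear_combination h | linear_combination -h

theorem cb1_mul_cb2_mem_GC : cb1 * cb2 ∈ GC :=
  GC_mul (t1_mem_GC _) (t2_mem_GC _)

theorem ofReal_sqrt_two_sq : ((√2 : ℝ) : ℂ) ^ 2 = 2 := by
  rw [← ofReal_pow, Real.sq_sqrt zero_le_two, ofReal_ofNat]

theorem cb1_mul_cb2_gram : (cb1 * cb2)ᴴ * hermMat * (cb1 * cb2) =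
    !![0, 0, -1, 0; 0, 0, 0, -1; -1, 0, 0, 0; 0, -1, 0, 0] := by
  ext i j; fin_cases i <;> fin_cases j <;>
    simp [cb1, cb2, t1, t2, hermMat, mul_apply, Fin.sum_univ_four] <;> ring_nf <;>
    simp [ofReal_sqrt_two_sq, map_ofNat]

theorem cdelta_mem_GC : cdelta ∈ GC := by
  refine mem_GC_of_transpose_mul_mul ?_
  ext i j; fin_cases i <;> fin_cases j <;>
    simp [cdelta, Jmat, mul_apply, Fin.sum_univ_four] <;> ring_nf <;> simp [ofReal_sqrt_two_sq]

theorem cdelta_gram : cdeltaᴴ * hermMat * cdelta =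
    !![0, 0, 0, -1; 0, 0, -1, 0; 0, -1, 0, 0; -1, 0, 0, 0] := by
  ext i j; fin_cases i <;> fin_cases j <;>
    simp [cdelta, hermMat, mul_apply, Fin.sum_univ_four] <;> ring_nf <;>
    simp [ofReal_sqrt_two_sq]

def unip (τ : ℝ) : M4 := 1 + (I * τ) • !![0, 0, 0, 0; 1, 0, 0, 0; 0, 0, 0, -1; 0, 0, 0, 0]

def borelCurve (τ : ℝ) : M4 :=
  !![2 * I * τ, 1, 0, 0; 0, 1, 0, 0; 0, 0, (2 * I * τ)⁻¹, 0; 0, 0, -(2 * I * τ)⁻¹, 1]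

theorem continuous_unip : Continuous unip := by
  unfold unip; fun_prop

theorem unip_zero : unip 0 = 1 := by simp [unip]

theorem unip_mem_GC (τ : ℝ) : unip τ ∈ GC := by
  refine mem_GC_of_transpose_mul_mul ?_
  ext i j; fin_cases i <;> fin_cases j <;>
    simp [unip, Jmat, mul_apply, Fin.sum_univ_four, one_apply]

theorem borelCurve_mem_Bor {τ : ℝ} (hτ : τ ≠ 0) : borelCurve τ ∈ Bor := by
  have hτ' : (τ : ℂ) ≠ 0 := ofReal_ne_zero.mpr hτ
  refine mem_Bor_of_mulVec_mem ?_ ?_ ?_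
  · refine mem_GC_of_transpose_mul_mul ?_
    ext i j; fin_cases i <;> fin_cases j <;>
      simp [borelCurve, Jmat, mul_apply, Fin.sum_univ_four] <;> field_simp <;> simp [I_sq]
  · have hcol : borelCurve τ *ᵥ stdVec 0 = (2 * I * τ) • stdVec 0 := by
      ext i; fin_cases i <;> simp [borelCurve, stdVec, mulVec, dotProduct, Fin.sum_univ_four]
    rw [hcol]
    exact Submodule.smul_mem _ _ (Submodule.mem_span_singleton_self _)
  · have hcol : borelCurve τ *ᵥ stdVec 1 = stdVec 0 + stdVec 1 := by
      ext i; fin_cases i <;> simp [borelCurve, stdVec, mulVec, dotProduct, Fin.sum_univ_four]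
    rw [hcol]
    exact Submodule.add_mem _ (Submodule.subset_span (by simp)) (Submodule.subset_span (by simp))

theorem unip_gram_eq_borelCurve_gram {τ : ℝ} (hτ : τ ≠ 0) :
    (unip τ)ᴴ * !![0, 0, -1, 0; 0, 0, 0, -1; -1, 0, 0, 0; 0, -1, 0, 0] * unip τ =
      (borelCurve τ)ᴴ * !![0, 0, 0, -1; 0, 0, -1, 0; 0, -1, 0, 0; -1, 0, 0, 0] * borelCurve τ := by
  have hτ' : (τ : ℂ) ≠ 0 := ofReal_ne_zero.mpr hτ
  ext i j; fin_cases i <;> fin_cases j <;>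
    simp [unip, borelCurve, mul_apply, Fin.sum_univ_four, one_apply, map_ofNat] <;> ring_nf <;>
    simp [I_sq, hτ']

theorem cb1_mul_cb2_mul_unip_mem_dc {τ : ℝ} (hτ : τ ≠ 0) :
    cb1 * cb2 * unip τ ∈ dc GR cdelta Bor := by
  refine mem_dc_of_conjTranspose_mul_mul_eq (GC_mul cb1_mul_cb2_mem_GC (unip_mem_GC τ))
    cdelta_mem_GC (borelCurve_mem_Bor hτ) ?_
  calc (cb1 * cb2 * unip τ)ᴴ * hermMat * (cb1 * cb2 * unip τ)
      = (unip τ)ᴴ * ((cb1 * cb2)ᴴ * hermMat * (cb1 * cb2)) * unip τ := by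
        simp only [conjTranspose_mul, Matrix.mul_assoc]
    _ = (borelCurve τ)ᴴ * (cdeltaᴴ * hermMat * cdelta) * borelCurve τ := by
        rw [cb1_mul_cb2_gram, cdelta_gram, unip_gram_eq_borelCurve_gram hτ]
    _ = (cdelta * borelCurve τ)ᴴ * hermMat * (cdelta * borelCurve τ) := by
        simp only [conjTranspose_mul, Matrix.mul_assoc]

theorem cb1_mul_cb2_mem_closure : cb1 * cb2 ∈ closure (dc GR cdelta Bor) := by
  have hlim : Tendsto (fun τ : ℝ => cb1 * cb2 * unip τ) (𝓝[≠] 0) (𝓝 (cb1 * cb2)) := by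
    have hc : Continuous fun τ : ℝ => cb1 * cb2 * unip τ := continuous_const.mul continuous_unip
    simpa [unip_zero] using (hc.tendsto 0).mono_left nhdsWithin_le_nhds
  exact mem_closure_of_tendsto hlim
    (eventually_nhdsWithin_of_forall fun _ hτ => cb1_mul_cb2_mul_unip_mem_dc hτ)

/-- `G_ℝ c_{β₁} c_{β₂} B ⊆ cl(G_ℝ c_δ B)`, i.e. `S'_op ⊆ S'₁₀^cl`. -/
theorem stmt_9 : dc GR (cb1 * cb2) Bor ⊆ closure (dc GR cdelta Bor) :=
  dc_subset_closure_dc (fun _ ha _ ha' => GR_mul ha ha') (fun _ hb _ hb' => Bor_mul hb hb')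
    cb1_mul_cb2_mem_closure
end
end

section
/- Let $x \in G_\mathbb{C}$ satisfy $x \in G_\mathbb{R} Q$ and $x \in G_\mathbb{R} t_1(-\pi/4) \overline{Q}$. Then the three sets $x K_\mathbb{C} w_{\beta_1} w_{\beta_2} B \cap G_\mathbb{R} c_{\beta_1} w_{\beta_2} B$, $x K_\mathbb{C} w_{\beta_1} B \cap G_\mathbb{R} c_{\beta_1} B$, and $x K_\mathbb{C} c_{\beta_2} w_{\beta_1} B \cap G_\mathbb{R} c_{\beta_1} c_{\beta_2} B$ are all nonempty. (Remark 3.1 (i): $xS_2\cap S'_9\ne\emptyset$, $xS_4\cap S'_8\ne\emptyset$, $xS_6\cap S'_{\rm op}\ne\emptyset$.) -/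
open Matrix

noncomputable section

/-!
Write `x = a t₁(-π/4) q` with `a ∈ G_ℝ` and `q ∈ Q̄ = N̄ K_ℂ`, so that `x k = a t₁(-π/4) n̄`
for some `k ∈ K_ℂ` and some `n̄ ∈ N̄`, given by a symmetric matrix `(s₁₁ s₁₂; s₁₂ s₂₂)`.
The three intersections for `x` contain `a` times those for `t₁(-π/4) n̄`, and
`t₁(-π/4) w_{β₁} = c_{β₁}`, so it suffices to factor `n̄ k' g = r g b` with `k' ∈ K_ℂ`,
`b ∈ B` and `r ∈ G_ℝ` commuting with `t₁`, for `g = w_{β₁} w_{β₂}`, `w_{β₁}` and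
`c_{β₂} w_{β₁}` (`t₁` commutes with `c_{β₂}` as well). For the first, `r = k' = 1` works. The other two need `|s₂₂| < 1`, which is
where `x ∈ G_ℝ Q` enters: `t₁(-π/4) n̄ e₂` has Hermitian norm `1 - |s₂₂|²` and is a
`G_ℝ`-translate of a nonzero vector of the positive definite `U₊`. Then an `r ∈ SU(1,1)`
acting on `ℂe₂ ⊕ ℂe₄` does the second case, and `k' = diag(1, ρ, 1, ρ⁻¹)` with
`ρ²(1 - s₂₂) = 1` the third.
-/

theorem Submodule.map_eq_self_of_map_le {K V : Type*} [DivisionRing K] [AddCommGroup V]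
    [Module K V] [FiniteDimensional K V] {f : V →ₗ[K] V} (hf : Function.Injective f)
    {U : Submodule K V} (h : U.map f ≤ U) : U.map f = U :=
  Submodule.eq_of_le_of_finrank_eq h (LinearEquiv.finrank_eq (U.equivMapOfInjective f hf)).symm

namespace Sp2

open Complex ComplexConjugate

theorem Jmat_mul_Jmat : Jmat * Jmat = -1 := by
  ext i j
  fin_cases i <;> fin_cases j <;> simp [Jmat, Matrix.mul_apply, Fin.sum_univ_four]

theorem mem_GC_of_symplectic {g : M4} (h : gᵀ * Jmat * g = Jmat) : g ∈ GC := by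
  refine ⟨IsUnit.of_mul_eq_one_right (-Jmat * gᵀ * Jmat) ?_, h⟩
  calc -Jmat * gᵀ * Jmat * g = -(Jmat * (gᵀ * Jmat * g)) := by noncomm_ring
    _ = 1 := by rw [h, Jmat_mul_Jmat, neg_neg]

theorem transpose_mul_Jmat_mul (g h : M4) :
    (g * h)ᵀ * Jmat * (g * h) = hᵀ * (gᵀ * Jmat * g) * h := by
  rw [Matrix.transpose_mul]; noncomm_ring

theorem mul_mem_GC {g h : M4} (hg : g ∈ GC) (hh : h ∈ GC) : g * h ∈ GC :=
  ⟨hg.1.mul hh.1, by rw [transpose_mul_Jmat_mul, hg.2, hh.2]⟩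

theorem mem_GC_of_mul_mem {g h : M4} (hg : g ∈ GC) (hgh : g * h ∈ GC) : h ∈ GC :=
  mem_GC_of_symplectic (by simpa only [transpose_mul_Jmat_mul, hg.2] using hgh.2)

theorem mul_mem_GR {g h : M4} (hg : g ∈ GR) (hh : h ∈ GR) : g * h ∈ GR :=
  ⟨mul_mem_GC hg.1 hh.1, fun w z => by simp only [← Matrix.mulVec_mulVec, hg.2, hh.2]⟩

theorem one_mem_GR : (1 : M4) ∈ GR :=
  ⟨⟨isUnit_one, by simp⟩, fun w z => by simp⟩

theorem mem_Uplus_iff {v : Fin 4 → ℂ} : v ∈ Uplus ↔ v 2 = 0 ∧ v 3 = 0 := by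
  rw [Uplus, Submodule.mem_span_pair]
  constructor
  · rintro ⟨α, β, rfl⟩
    simp [stdVec]
  · rintro ⟨h2, h3⟩
    refine ⟨v 0, v 1, funext fun i => ?_⟩
    fin_cases i <;> simp [stdVec, h2, h3]

theorem mem_Uminus_iff {v : Fin 4 → ℂ} : v ∈ Uminus ↔ v 0 = 0 ∧ v 1 = 0 := by
  rw [Uminus, Submodule.mem_span_pair]
  constructor
  · rintro ⟨α, β, rfl⟩
    simp [stdVec]
  · rintro ⟨h0, h1⟩
    refine ⟨v 2, v 3, funext fun i => ?_⟩
    fin_cases i <;> simp [stdVec, h0, h1]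

theorem mem_line1_iff {v : Fin 4 → ℂ} : v ∈ line1 ↔ v 1 = 0 ∧ v 2 = 0 ∧ v 3 = 0 := by
  rw [line1, Submodule.mem_span_singleton]
  constructor
  · rintro ⟨α, rfl⟩
    simp [stdVec]
  · rintro ⟨h1, h2, h3⟩
    refine ⟨v 0, funext fun i => ?_⟩
    fin_cases i <;> simp [stdVec, h1, h2, h3]

theorem map_mulVecLin_eq_self {p : M4} (hp : IsUnit p) {U : Submodule ℂ (Fin 4 → ℂ)}
    (h : ∀ v ∈ U, p *ᵥ v ∈ U) : U.map p.mulVecLin = U :=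
  Submodule.map_eq_self_of_map_le (Matrix.mulVec_injective_iff_isUnit.2 hp)
    (Submodule.map_le_iff_le_comap.2 h)

theorem mem_Bor_of {p : M4} (hp : p ∈ GC) (h10 : p 1 0 = 0) (h20 : p 2 0 = 0)
    (h30 : p 3 0 = 0) (h21 : p 2 1 = 0) (h31 : p 3 1 = 0) : p ∈ Bor := by
  refine ⟨hp, map_mulVecLin_eq_self hp.1 fun v hv => ?_,
    map_mulVecLin_eq_self hp.1 fun v hv => ?_⟩
  · obtain ⟨hv1, hv2, hv3⟩ := mem_line1_iff.1 hv
    simp [mem_line1_iff, Matrix.mulVec, dotProduct, Fin.sum_univ_four, *]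
  · obtain ⟨hv2, hv3⟩ := mem_Uplus_iff.1 hv
    simp [mem_Uplus_iff, Matrix.mulVec, dotProduct, Fin.sum_univ_four, *]

theorem one_mem_Bor : (1 : M4) ∈ Bor :=
  mem_Bor_of ⟨isUnit_one, by simp⟩ rfl rfl rfl rfl rfl

def blk (g h : Matrix (Fin 2) (Fin 2) ℂ) : M4 :=
  !![g 0 0, g 0 1, 0, 0;
     g 1 0, g 1 1, 0, 0;
     0, 0, h 0 0, h 0 1;
     0, 0, h 1 0, h 1 1]

theorem blk_mul (g₁ h₁ g₂ h₂ : Matrix (Fin 2) (Fin 2) ℂ) :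
    blk g₁ h₁ * blk g₂ h₂ = blk (g₁ * g₂) (h₁ * h₂) := by
  ext i j
  fin_cases i <;> fin_cases j <;> simp [blk, Matrix.mul_apply, Fin.sum_univ_four]

theorem blk_mem_KC {g h : Matrix (Fin 2) (Fin 2) ℂ} (hg : IsUnit g) (hgh : gᵀ * h = 1) :
    blk g h ∈ KC :=
  ⟨g, hg, by rw [Matrix.inv_eq_right_inv hgh]; rfl⟩

theorem exists_blk_of_mem_KC {k : M4} (hk : k ∈ KC) :
    ∃ g h, IsUnit g ∧ gᵀ * h = 1 ∧ k = blk g h := by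
  obtain ⟨g, hg, rfl⟩ := hk
  refine ⟨g, (gᵀ)⁻¹, hg, Matrix.mul_nonsing_inv _ ?_, rfl⟩
  rw [Matrix.det_transpose, ← Matrix.isUnit_iff_isUnit_det]
  exact hg

theorem mul_mem_KC {k₁ k₂ : M4} (hk₁ : k₁ ∈ KC) (hk₂ : k₂ ∈ KC) : k₁ * k₂ ∈ KC := by
  obtain ⟨g₁, h₁, hg₁, hgh₁, rfl⟩ := exists_blk_of_mem_KC hk₁
  obtain ⟨g₂, h₂, hg₂, hgh₂, rfl⟩ := exists_blk_of_mem_KC hk₂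
  refine blk_mul g₁ h₁ g₂ h₂ ▸ blk_mem_KC (hg₁.mul hg₂) ?_
  calc (g₁ * g₂)ᵀ * (h₁ * h₂) = g₂ᵀ * (g₁ᵀ * h₁) * h₂ := by
        rw [Matrix.transpose_mul]; noncomm_ring
    _ = 1 := by rw [hgh₁, Matrix.mul_one, hgh₂]

theorem one_mem_KC : (1 : M4) ∈ KC := by
  convert blk_mem_KC (g := 1) (h := 1) isUnit_one (by simp)
  ext i j
  fin_cases i <;> fin_cases j <;> rfl

theorem blk_mem_GC {g h : Matrix (Fin 2) (Fin 2) ℂ} (hgh : gᵀ * h = 1) : blk g h ∈ GC := by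
  have hhg : hᵀ * g = 1 := by simpa using congrArg Matrix.transpose hgh
  have e := fun i j => congrFun₂ hgh i j
  have e' := fun i j => congrFun₂ hhg i j
  simp only [Matrix.mul_apply, Fin.sum_univ_two, Matrix.transpose_apply] at e e'
  refine mem_GC_of_symplectic ?_
  ext i j
  fin_cases i <;> fin_cases j <;>
    simp [blk, Jmat, Matrix.mul_apply, Fin.sum_univ_four, ← neg_add, e, e']

theorem mem_GC_of_mem_KC {k : M4} (hk : k ∈ KC) : k ∈ GC := by
  obtain ⟨g, h, -, hgh, rfl⟩ := exists_blk_of_mem_KC hk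
  exact blk_mem_GC hgh

-- The unipotent radical `N̄` of `Q̄`.
def nbar (s₁₁ s₁₂ s₂₂ : ℂ) : M4 :=
  !![1, 0, 0, 0;
     0, 1, 0, 0;
     s₁₁, s₁₂, 1, 0;
     s₁₂, s₂₂, 0, 1]

theorem nbar_mem_GC (s₁₁ s₁₂ s₂₂ : ℂ) : nbar s₁₁ s₁₂ s₂₂ ∈ GC := by
  refine mem_GC_of_symplectic ?_
  ext i j
  fin_cases i <;> fin_cases j <;> simp [nbar, Jmat, Matrix.mul_apply, Fin.sum_univ_four]

theorem Qbar_apply_eq_zero {q : M4} (hq : q ∈ Qbar) :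
    q 0 2 = 0 ∧ q 1 2 = 0 ∧ q 0 3 = 0 ∧ q 1 3 = 0 := by
  have hcol : ∀ j, stdVec j ∈ Uminus → q 0 j = 0 ∧ q 1 j = 0 := fun j hj => by
    have := mem_Uminus_iff.1 (hq.2 ▸ Submodule.mem_map_of_mem (f := q.mulVecLin) hj)
    simpa [stdVec, Matrix.mulVec_single] using this
  have h2 := hcol 2 (Submodule.subset_span (by simp))
  have h3 := hcol 3 (Submodule.subset_span (by simp))
  exact ⟨h2.1, h2.2, h3.1, h3.2⟩

theorem eq_nbar_of_mem_GC {n : M4} (hn : n ∈ GC)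
    (h00 : n 0 0 = 1) (h01 : n 0 1 = 0) (h10 : n 1 0 = 0) (h11 : n 1 1 = 1)
    (h02 : n 0 2 = 0) (h03 : n 0 3 = 0) (h12 : n 1 2 = 0) (h13 : n 1 3 = 0)
    (h22 : n 2 2 = 1) (h23 : n 2 3 = 0) (h32 : n 3 2 = 0) (h33 : n 3 3 = 1) :
    n = nbar (n 2 0) (n 2 1) (n 3 1) := by
  have hsymm : n 3 0 = n 2 1 := by
    have e := congrFun₂ hn.2 0 1
    simp [Matrix.mul_apply, Fin.sum_univ_four, Jmat, *] at e
    linear_combination e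
  ext i j
  fin_cases i <;> fin_cases j <;> simp [nbar, *]

theorem exists_mul_eq_nbar_of_mem_Qbar {q : M4} (hq : q ∈ Qbar) :
    ∃ k ∈ KC, ∃ s₁₁ s₁₂ s₂₂ : ℂ, q * k = nbar s₁₁ s₁₂ s₂₂ := by
  obtain ⟨h02, h12, h03, h13⟩ := Qbar_apply_eq_zero hq
  set A : Matrix (Fin 2) (Fin 2) ℂ := !![q 0 0, q 0 1; q 1 0, q 1 1]
  set D : Matrix (Fin 2) (Fin 2) ℂ := !![q 2 2, q 2 3; q 3 2, q 3 3]
  have hAD : Aᵀ * D = 1 := by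
    have e02 := congrFun₂ hq.1.2 0 2
    have e03 := congrFun₂ hq.1.2 0 3
    have e12 := congrFun₂ hq.1.2 1 2
    have e13 := congrFun₂ hq.1.2 1 3
    simp [Matrix.mul_apply, Fin.sum_univ_four, Jmat, h02, h12, h03, h13] at e02 e03 e12 e13
    ext i j
    fin_cases i <;> fin_cases j <;> simp [A, D, Matrix.mul_apply, Fin.sum_univ_two]
    · linear_combination -e02
    · linear_combination -e03
    · linear_combination -e12
    · linear_combination -e13
  have hDA : D * Aᵀ = 1 := mul_eq_one_comm.1 hAD
  have hA : IsUnit A := by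
    refine IsUnit.of_mul_eq_one Dᵀ ?_
    simpa using congrArg Matrix.transpose hDA
  have hAA : A * A⁻¹ = 1 := A.mul_nonsing_inv ((A.isUnit_iff_isUnit_det).1 hA)
  have hk : (A⁻¹)ᵀ * Aᵀ = 1 := by rw [← Matrix.transpose_mul, hAA, Matrix.transpose_one]
  have ea := fun i j => congrFun₂ hAA i j
  have ed := fun i j => congrFun₂ hDA i j
  simp [A, D, Matrix.mul_apply, Fin.sum_univ_two] at ea ed
  refine ⟨blk A⁻¹ Aᵀ, blk_mem_KC (Matrix.isUnit_nonsing_inv_iff.2 hA) hk, _, _, _,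
    eq_nbar_of_mem_GC (mul_mem_GC hq.1 (blk_mem_GC hk)) ?_ ?_ ?_ ?_ ?_ ?_ ?_ ?_ ?_ ?_ ?_ ?_⟩
  all_goals simp [A, blk, Matrix.mul_apply, Fin.sum_univ_four, h02, h12, h03, h13, ea, ed]

-- `m` acting on `ℂe₂ ⊕ ℂe₄`, i.e. on the coordinates `1, 3` of `Fin 4`.
def embed24 (m : Matrix (Fin 2) (Fin 2) ℂ) : M4 :=
  !![1, 0, 0, 0;
     0, m 0 0, 0, m 0 1;
     0, 0, 1, 0;
     0, m 1 0, 0, m 1 1]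

theorem t1_mul_embed24 (s : ℝ) (m : Matrix (Fin 2) (Fin 2) ℂ) :
    t1 s * embed24 m = embed24 m * t1 s := by
  ext i j
  fin_cases i <;> fin_cases j <;> simp [t1, embed24, Matrix.mul_apply, Fin.sum_univ_four]

theorem t2_eq_embed24 (s : ℝ) :
    t2 s = embed24
      !![(Real.cos s : ℂ), -(Real.sin s : ℂ); (Real.sin s : ℂ), (Real.cos s : ℂ)] := by
  ext i j
  fin_cases i <;> fin_cases j <;> simp [t2, embed24]

theorem t1_add (s u : ℝ) : t1 s * t1 u = t1 (s + u) := by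
  ext i j
  fin_cases i <;> fin_cases j <;>
    simp [t1, Matrix.mul_apply, Fin.sum_univ_four, Real.cos_add, Real.sin_add] <;> ring

theorem t1_mem_GC (s : ℝ) : t1 s ∈ GC := by
  refine mem_GC_of_symplectic ?_
  have h := Complex.cos_sq_add_sin_sq s
  ext i j
  fin_cases i <;> fin_cases j <;>
    simp [t1, Jmat, Matrix.mul_apply, Fin.sum_univ_four] <;> grind

theorem embed24_mem_GC {m : Matrix (Fin 2) (Fin 2) ℂ} (hm : m.det = 1) : embed24 m ∈ GC := by
  refine mem_GC_of_symplectic ?_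
  rw [Matrix.det_fin_two] at hm
  ext i j
  fin_cases i <;> fin_cases j <;>
    simp [embed24, Jmat, Matrix.mul_apply, Fin.sum_univ_four] <;> grind

theorem t2_mem_GC (s : ℝ) : t2 s ∈ GC := by
  refine t2_eq_embed24 s ▸ embed24_mem_GC ?_
  simp [Matrix.det_fin_two, ← sq]

theorem t1_mul_t2 (s u : ℝ) : t1 s * t2 u = t2 u * t1 s := by
  rw [t2_eq_embed24, t1_mul_embed24]

def su11 (α β : ℂ) : M4 := embed24 !![α, β; conj β, conj α]

theorem su11_mem_GR {α β : ℂ} (h : normSq α - normSq β = 1) : su11 α β ∈ GR := by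
  have h' : α * conj α - β * conj β = 1 := by
    simp only [mul_conj]; exact_mod_cast h
  refine ⟨embed24_mem_GC ?_, fun w z => ?_⟩
  · simp [Matrix.det_fin_two]; linear_combination h'
  · simp [su11, embed24, hermForm, Matrix.mulVec, dotProduct, Fin.sum_univ_four]
    linear_combination (conj (w 1) * z 1 - conj (w 3) * z 3) * h'

theorem su11_real_mem_GR {s : ℂ} {α : ℝ} (hα : α ^ 2 * (1 - normSq s) = 1) :
    su11 α (α * conj s) ∈ GR :=
  su11_mem_GR (by simp only [normSq_mul, normSq_ofReal, normSq_conj]; linear_combination hα)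

def halfSqrtTwo : ℂ := ((Real.sqrt 2 / 2 : ℝ) : ℂ)

theorem halfSqrtTwo_sq : halfSqrtTwo ^ 2 = 1 / 2 := by
  rw [halfSqrtTwo, ← Complex.ofReal_pow, div_pow, Real.sq_sqrt zero_le_two]
  norm_num

theorem conj_halfSqrtTwo : conj halfSqrtTwo = halfSqrtTwo := Complex.conj_ofReal _

theorem t1_neg_pi_div_four_eq :
    t1 (-(Real.pi / 4)) =
      !![halfSqrtTwo, 0, halfSqrtTwo, 0;
         0, 1, 0, 0;
         -halfSqrtTwo, 0, halfSqrtTwo, 0;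
         0, 0, 0, 1] := by
  simp [t1, halfSqrtTwo]

theorem cb2_eq :
    cb2 =
      !![1, 0, 0, 0;
         0, halfSqrtTwo, 0, -halfSqrtTwo;
         0, 0, 1, 0;
         0, halfSqrtTwo, 0, halfSqrtTwo] := by
  simp [cb2, t2, halfSqrtTwo]

theorem wb1_eq : wb1 = !![0, 0, -1, 0; 0, 1, 0, 0; 1, 0, 0, 0; 0, 0, 0, 1] := by
  simp [wb1, t1]

theorem wb2_eq : wb2 = !![1, 0, 0, 0; 0, 0, 0, -1; 0, 0, 1, 0; 0, 1, 0, 0] := by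
  simp [wb2, t2]

theorem t1_neg_pi_div_four_mul_wb1 : t1 (-(Real.pi / 4)) * wb1 = cb1 := by
  rw [wb1, t1_add, cb1]; ring_nf

def b₁ (s₁₁ s₁₂ s₂₂ : ℂ) : M4 :=
  !![1, 0, -s₁₁, -s₁₂; 0, 1, -s₁₂, -s₂₂; 0, 0, 1, 0; 0, 0, 0, 1]

theorem nbar_mul_wb1_mul_wb2 (s₁₁ s₁₂ s₂₂ : ℂ) :
    nbar s₁₁ s₁₂ s₂₂ * (wb1 * wb2) = wb1 * wb2 * b₁ s₁₁ s₁₂ s₂₂ := by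
  rw [wb1_eq, wb2_eq]
  ext i j
  fin_cases i <;> fin_cases j <;> simp [nbar, b₁, Matrix.mul_apply, Fin.sum_univ_four]

def b₂ (α s₁₁ s₁₂ s₂₂ : ℂ) : M4 :=
  !![1, s₁₂, -s₁₁, 0;
     0, α - α * s₂₂ * conj s₂₂, α * conj s₂₂ * s₁₂, -(α * conj s₂₂);
     0, 0, 1, 0;
     0, 0, -(α * s₁₂), α]

theorem nbar_mul_wb1 (s₁₁ s₁₂ s₂₂ : ℂ) {α : ℝ} (hα : α ^ 2 * (1 - normSq s₂₂) = 1) :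
    nbar s₁₁ s₁₂ s₂₂ * wb1 = su11 α (α * conj s₂₂) * wb1 * b₂ α s₁₁ s₁₂ s₂₂ := by
  have h : (α : ℂ) ^ 2 * (1 - s₂₂ * conj s₂₂) = 1 := by
    rw [mul_conj]; exact_mod_cast hα
  rw [wb1_eq]
  ext i j
  fin_cases i <;> fin_cases j <;>
    simp [nbar, su11, embed24, b₂, Matrix.mul_apply, Fin.sum_univ_four] <;> grind

def b₃ (ρ s₁₁ s₁₂ s₂₂ : ℂ) : M4 :=
  !![1, ρ * halfSqrtTwo * s₁₂, -s₁₁, -(ρ * halfSqrtTwo * s₁₂);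
     0, ρ, -(halfSqrtTwo * s₁₂), -(ρ * s₂₂);
     0, 0, 1, 0;
     0, 0, -(halfSqrtTwo * s₁₂), ρ⁻¹]

theorem nbar_mul_embed24_mul_cb2_mul_wb1 (s₁₁ s₁₂ s₂₂ : ℂ) {ρ : ℂ}
    (hρ : ρ ^ 2 * (1 - s₂₂) = 1) :
    nbar s₁₁ s₁₂ s₂₂ * embed24 !![ρ, 0; 0, ρ⁻¹] * (cb2 * wb1) =
      cb2 * wb1 * b₃ ρ s₁₁ s₁₂ s₂₂ := by
  have hρ0 : ρ ≠ 0 := by rintro rfl; simp at hρ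
  have hρinv : ρ⁻¹ = ρ * (1 - s₂₂) := by field_simp; linear_combination -hρ
  have hcc := halfSqrtTwo_sq
  rw [cb2_eq, wb1_eq]
  ext i j
  fin_cases i <;> fin_cases j <;>
    simp [nbar, embed24, b₃, Matrix.mul_apply, Fin.sum_univ_four, hρinv] <;> grind

theorem b₁_mem_Bor (s₁₁ s₁₂ s₂₂ : ℂ) : b₁ s₁₁ s₁₂ s₂₂ ∈ Bor := by
  have hw : wb1 * wb2 ∈ GC := mul_mem_GC (t1_mem_GC _) (t2_mem_GC _)
  refine mem_Bor_of (mem_GC_of_mul_mem hw ?_) rfl rfl rfl rfl rfl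
  rw [← nbar_mul_wb1_mul_wb2]
  exact mul_mem_GC (nbar_mem_GC _ _ _) hw

theorem b₂_mem_Bor (s₁₁ s₁₂ s₂₂ : ℂ) {α : ℝ} (hα : α ^ 2 * (1 - normSq s₂₂) = 1) :
    b₂ α s₁₁ s₁₂ s₂₂ ∈ Bor := by
  have hw : wb1 ∈ GC := t1_mem_GC _
  have hrw := mul_mem_GC (su11_real_mem_GR hα).1 hw
  refine mem_Bor_of (mem_GC_of_mul_mem hrw ?_) rfl rfl rfl rfl rfl
  rw [← nbar_mul_wb1 _ _ _ hα]
  exact mul_mem_GC (nbar_mem_GC _ _ _) hw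

theorem embed24_diag_mem_KC {ρ : ℂ} (hρ : ρ ≠ 0) : embed24 !![ρ, 0; 0, ρ⁻¹] ∈ KC := by
  convert blk_mem_KC (g := !![1, 0; 0, ρ]) (h := !![1, 0; 0, ρ⁻¹]) ?_ ?_ using 1
  · ext i j
    fin_cases i <;> fin_cases j <;> rfl
  · rw [Matrix.isUnit_iff_isUnit_det, Matrix.det_fin_two_of]
    simpa using hρ
  · ext i j
    fin_cases i <;> fin_cases j <;> simp [Matrix.mul_apply, Fin.sum_univ_two, hρ]

theorem b₃_mem_Bor (s₁₁ s₁₂ s₂₂ : ℂ) {ρ : ℂ} (hρ : ρ ^ 2 * (1 - s₂₂) = 1) :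
    b₃ ρ s₁₁ s₁₂ s₂₂ ∈ Bor := by
  have hρ0 : ρ ≠ 0 := by rintro rfl; simp at hρ
  have hw : cb2 * wb1 ∈ GC := mul_mem_GC (t2_mem_GC _) (t1_mem_GC _)
  refine mem_Bor_of (mem_GC_of_mul_mem hw ?_) rfl rfl rfl rfl rfl
  rw [← nbar_mul_embed24_mul_cb2_mul_wb1 _ _ _ hρ]
  exact mul_mem_GC (mul_mem_GC (nbar_mem_GC _ _ _)
    (mem_GC_of_mem_KC (embed24_diag_mem_KC hρ0))) hw

theorem re_hermForm_self_pos_of_mem_Uplus {u : Fin 4 → ℂ} (hu : u ∈ Uplus) (hu0 : u ≠ 0) :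
    0 < (hermForm u u).re := by
  obtain ⟨h2, h3⟩ := mem_Uplus_iff.1 hu
  have h01 : u 0 ≠ 0 ∨ u 1 ≠ 0 := by
    by_contra! h
    exact hu0 (funext fun i => by fin_cases i <;> simp [h, h2, h3])
  have hre : (hermForm u u).re = normSq (u 0) + normSq (u 1) := by
    simp [hermForm, h2, h3, normSq_apply, mul_comm]
  rw [hre]
  rcases h01 with h | h
  · exact add_pos_of_pos_of_nonneg (normSq_pos.2 h) (normSq_nonneg _)
  · exact add_pos_of_nonneg_of_pos (normSq_nonneg _) (normSq_pos.2 h)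

theorem re_hermForm_self_pos_of_mulVec_eq {a a' : M4} (ha : a ∈ GR) (ha' : a' ∈ GR)
    {u v : Fin 4 → ℂ} (hu : u ∈ Uplus) (hv : v ≠ 0) (h : a *ᵥ v = a' *ᵥ u) :
    0 < (hermForm v v).re := by
  have hu0 : u ≠ 0 := by
    rintro rfl
    rw [Matrix.mulVec_zero] at h
    exact hv (Matrix.mulVec_injective_iff_isUnit.2 ha.1.1
      (h.trans (Matrix.mulVec_zero a).symm))
  rw [← ha.2, h, ha'.2]
  exact re_hermForm_self_pos_of_mem_Uplus hu hu0

theorem mulVec_mem_Uplus_of_mem_KC {k : M4} (hk : k ∈ KC) {v : Fin 4 → ℂ} (hv : v ∈ Uplus) :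
    k *ᵥ v ∈ Uplus := by
  obtain ⟨g, -, rfl⟩ := hk
  obtain ⟨h2, h3⟩ := mem_Uplus_iff.1 hv
  simp [mem_Uplus_iff, dotProduct, Fin.sum_univ_four, h2, h3]

theorem mulVec_mem_Uplus_of_mem_Qpar {q : M4} (hq : q ∈ Qpar) {v : Fin 4 → ℂ}
    (hv : v ∈ Uplus) : q *ᵥ v ∈ Uplus :=
  hq.2 ▸ Submodule.mem_map_of_mem (f := q.mulVecLin) hv

theorem normSq_lt_one_of_mem_GR_Qpar {x k a : M4} (hx : x ∈ dc GR 1 Qpar) (hk : k ∈ KC)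
    (ha : a ∈ GR) {s₁₁ s₁₂ s₂₂ : ℂ}
    (h : x * k = a * (t1 (-(Real.pi / 4)) * nbar s₁₁ s₁₂ s₂₂)) : normSq s₂₂ < 1 := by
  obtain ⟨a', ha', q, hq, rfl⟩ := hx
  set v := (t1 (-(Real.pi / 4)) * nbar s₁₁ s₁₂ s₂₂) *ᵥ stdVec 1 with hv_def
  have hv : v = ![halfSqrtTwo * s₁₂, 1, halfSqrtTwo * s₁₂, s₂₂] := by
    rw [hv_def, t1_neg_pi_div_four_eq]
    ext i
    fin_cases i <;> simp [nbar, stdVec, Matrix.mulVec, dotProduct, Fin.sum_univ_four]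
  have he₂ : stdVec 1 ∈ Uplus := mem_Uplus_iff.2 (by simp [stdVec])
  have hu := mulVec_mem_Uplus_of_mem_Qpar hq (mulVec_mem_Uplus_of_mem_KC hk he₂)
  have hpos := re_hermForm_self_pos_of_mulVec_eq ha ha' hu (v := v)
    (fun h0 => by simpa [hv] using congrFun h0 1) (by
      rw [hv_def, Matrix.mulVec_mulVec, ← h]
      simp only [Matrix.mul_one, Matrix.mulVec_mulVec, Matrix.mul_assoc])
  simpa [hv, hermForm, conj_halfSqrtTwo, normSq_apply] using hpos

theorem nonempty_inter_of_eq {y g c k r b : M4} (hk : k ∈ KC) (hr : r ∈ GR) (hb : b ∈ Bor)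
    (h : y * (k * g) = r * c * b) :
    ((fun m => y * m) '' dc KC g Bor ∩ dc GR c Bor).Nonempty :=
  ⟨y * (k * g), ⟨k * g, ⟨k, hk, 1, one_mem_Bor, (Matrix.mul_one _).symm⟩, rfl⟩,
    r, hr, b, hb, h⟩

theorem nonempty_inter_of_mul_eq {x y k a g c : M4} (hk : k ∈ KC) (ha : a ∈ GR)
    (hxy : x * k = a * y) (h : ((fun m => y * m) '' dc KC g Bor ∩ dc GR c Bor).Nonempty) :
    ((fun m => x * m) '' dc KC g Bor ∩ dc GR c Bor).Nonempty := by
  obtain ⟨-, ⟨-, ⟨k', hk', b', hb', rfl⟩, rfl⟩, r, hr, b, hb,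
    h : y * (k' * g * b') = r * c * b⟩ := h
  refine ⟨x * (k * k' * g * b'), ⟨_, ⟨k * k', mul_mem_KC hk hk', b', hb', rfl⟩, rfl⟩,
    a * r, mul_mem_GR ha hr, b, hb, ?_⟩
  calc x * (k * k' * g * b') = x * k * (k' * g * b') := by noncomm_ring
    _ = a * r * c * b := by rw [hxy, Matrix.mul_assoc, h]; noncomm_ring

variable (s₁₁ s₁₂ s₂₂ : ℂ)

theorem nonempty_inter_wb1_mul_wb2 :
    ((fun m => t1 (-(Real.pi / 4)) * nbar s₁₁ s₁₂ s₂₂ * m) '' dc KC (wb1 * wb2) Bor ∩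
      dc GR (cb1 * wb2) Bor).Nonempty := by
  refine nonempty_inter_of_eq one_mem_KC one_mem_GR (b₁_mem_Bor s₁₁ s₁₂ s₂₂) ?_
  calc t1 (-(Real.pi / 4)) * nbar s₁₁ s₁₂ s₂₂ * (1 * (wb1 * wb2))
      = t1 (-(Real.pi / 4)) * (nbar s₁₁ s₁₂ s₂₂ * (wb1 * wb2)) := by noncomm_ring
    _ = t1 (-(Real.pi / 4)) * wb1 * wb2 * b₁ s₁₁ s₁₂ s₂₂ := by
        rw [nbar_mul_wb1_mul_wb2]; noncomm_ring
    _ = 1 * (cb1 * wb2) * b₁ s₁₁ s₁₂ s₂₂ := by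
        rw [t1_neg_pi_div_four_mul_wb1]; noncomm_ring

theorem nonempty_inter_wb1 (hs : normSq s₂₂ < 1) :
    ((fun m => t1 (-(Real.pi / 4)) * nbar s₁₁ s₁₂ s₂₂ * m) '' dc KC wb1 Bor ∩
      dc GR cb1 Bor).Nonempty := by
  set α : ℝ := (Real.sqrt (1 - normSq s₂₂))⁻¹
  have hα : α ^ 2 * (1 - normSq s₂₂) = 1 := by
    rw [inv_pow, Real.sq_sqrt (by linarith), inv_mul_cancel₀ (by linarith)]
  set r := su11 α (α * conj s₂₂)
  have hr : t1 (-(Real.pi / 4)) * r = r * t1 (-(Real.pi / 4)) := t1_mul_embed24 _ _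
  refine nonempty_inter_of_eq one_mem_KC (su11_real_mem_GR hα)
    (b₂_mem_Bor s₁₁ s₁₂ s₂₂ hα) ?_
  calc t1 (-(Real.pi / 4)) * nbar s₁₁ s₁₂ s₂₂ * (1 * wb1)
      = t1 (-(Real.pi / 4)) * (nbar s₁₁ s₁₂ s₂₂ * wb1) := by noncomm_ring
    _ = t1 (-(Real.pi / 4)) * r * wb1 * b₂ α s₁₁ s₁₂ s₂₂ := by
        rw [nbar_mul_wb1 _ _ _ hα]; noncomm_ring
    _ = r * cb1 * b₂ α s₁₁ s₁₂ s₂₂ := by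
        rw [hr, Matrix.mul_assoc r, t1_neg_pi_div_four_mul_wb1]

theorem nonempty_inter_cb2_mul_wb1 (hs : s₂₂ ≠ 1) :
    ((fun m => t1 (-(Real.pi / 4)) * nbar s₁₁ s₁₂ s₂₂ * m) '' dc KC (cb2 * wb1) Bor ∩
      dc GR (cb1 * cb2) Bor).Nonempty := by
  obtain ⟨ρ, hρ⟩ := IsAlgClosed.exists_pow_nat_eq (1 - s₂₂)⁻¹ two_pos
  have hρ' : ρ ^ 2 * (1 - s₂₂) = 1 := by
    rw [hρ, inv_mul_cancel₀ (sub_ne_zero.2 hs.symm)]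
  have hρ0 : ρ ≠ 0 := by rintro rfl; simp at hρ'
  refine nonempty_inter_of_eq (embed24_diag_mem_KC hρ0) one_mem_GR
    (b₃_mem_Bor s₁₁ s₁₂ s₂₂ hρ') ?_
  calc t1 (-(Real.pi / 4)) * nbar s₁₁ s₁₂ s₂₂ * (embed24 !![ρ, 0; 0, ρ⁻¹] * (cb2 * wb1))
      = t1 (-(Real.pi / 4)) *
          (nbar s₁₁ s₁₂ s₂₂ * embed24 !![ρ, 0; 0, ρ⁻¹] * (cb2 * wb1)) := by
        noncomm_ring
    _ = t1 (-(Real.pi / 4)) * cb2 * wb1 * b₃ ρ s₁₁ s₁₂ s₂₂ := by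
        rw [nbar_mul_embed24_mul_cb2_mul_wb1 _ _ _ hρ']; noncomm_ring
    _ = cb2 * (t1 (-(Real.pi / 4)) * wb1) * b₃ ρ s₁₁ s₁₂ s₂₂ := by
        rw [cb2, t1_mul_t2]; noncomm_ring
    _ = 1 * (cb1 * cb2) * b₃ ρ s₁₁ s₁₂ s₂₂ := by
        rw [t1_neg_pi_div_four_mul_wb1, cb1, cb2, t1_mul_t2, Matrix.one_mul]

end Sp2

open Sp2

/-- Remark 3.1 (i): if `x ∈ G_ℝ Q` and `x ∈ G_ℝ t₁(-π/4) Q̄`, then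
`xS₂ ∩ S'₉`, `xS₄ ∩ S'₈` and `xS₆ ∩ S'_op` are all nonempty. -/
theorem stmt_10 (x : M4) (hx1 : x ∈ dc GR 1 Qpar)
    (hx2 : x ∈ dc GR (t1 (-(Real.pi / 4))) Qbar) :
    ((fun m => x * m) '' dc KC (wb1 * wb2) Bor ∩ dc GR (cb1 * wb2) Bor).Nonempty ∧
    ((fun m => x * m) '' dc KC wb1 Bor ∩ dc GR cb1 Bor).Nonempty ∧
    ((fun m => x * m) '' dc KC (cb2 * wb1) Bor ∩ dc GR (cb1 * cb2) Bor).Nonempty := by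
  obtain ⟨a, ha, q, hq, rfl⟩ := hx2
  obtain ⟨k, hk, s₁₁, s₁₂, s₂₂, hqk⟩ := exists_mul_eq_nbar_of_mem_Qbar hq
  have hxk : a * t1 (-(Real.pi / 4)) * q * k =
      a * (t1 (-(Real.pi / 4)) * nbar s₁₁ s₁₂ s₂₂) := by
    rw [Matrix.mul_assoc, hqk, Matrix.mul_assoc]
  have hs : Complex.normSq s₂₂ < 1 := normSq_lt_one_of_mem_GR_Qpar hx1 hk ha hxk
  have hs' : s₂₂ ≠ 1 := by rintro rfl; simp at hs
  refine ⟨?_, ?_, ?_⟩ <;> refine nonempty_inter_of_mul_eq hk ha hxk ?_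
  · exact nonempty_inter_wb1_mul_wb2 s₁₁ s₁₂ s₂₂
  · exact nonempty_inter_wb1 s₁₁ s₁₂ s₂₂ hs
  · exact nonempty_inter_cb2_mul_wb1 s₁₁ s₁₂ s₂₂ hs'
end
end
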